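/- arXiv:1701.00465 — 7 statements merged into one kernel-verified Lean document; each statement's English description precedes it below -/
import Mathlib

section
/- Let $G$ be a countable abelian group, $g \in G$, and $A \subseteq G$. If $A \cap (A+g) = \varnothing$, then $d^*(A \cup (A+g)) = 2 d^*(A)$, where $d^*$ denotes upper Banach density. -/
open Filter
open scoped Classical Pointwise

/-- A Følner sequence for an abelian group `G`. -/
def IsFolner {G : Type*} [AddCommGroup G] (Φ : ℕ → Finset G) : Prop :=
  ∀ g : G, Tendsto (fun n => ((((Φ n).image (· + g)) ∩ Φ n).card : ℝ) / (Φ n).card)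
    atTop (nhds 1)

/-- Upper density of `A` along the Følner sequence `Φ`. -/
noncomputable def upperDensAlong {G : Type*} [AddCommGroup G] (Φ : ℕ → Finset G)
    (A : Set G) : ℝ :=
  limsup (fun n => (((Φ n).filter (· ∈ A)).card : ℝ) / (Φ n).card) atTop

/-- Upper Banach density. -/
noncomputable def banachDensity {G : Type*} [AddCommGroup G] (A : Set G) : ℝ :=
  sSup {d | ∃ Φ : ℕ → Finset G, IsFolner Φ ∧ d = upperDensAlong Φ A}

/-- Counting helper: comparing a filtered count over two finsets. -/
lemma count_filter_inter {G : Type*} [DecidableEq G] (s t : Finset G) (P : G → Prop)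
    [DecidablePred P] :
    (s.filter P).card + (s ∩ t).card ≤ (t.filter P).card + s.card := by
  have hsub : s.filter P ⊆ t.filter P ∪ (s \ t) := by
    intro x hx
    simp only [Finset.mem_filter, Finset.mem_union, Finset.mem_sdiff] at *
    by_cases hxt : x ∈ t
    · exact Or.inl ⟨hxt, hx.2⟩
    · exact Or.inr ⟨hx.1, hxt⟩
  calc (s.filter P).card + (s ∩ t).card
      ≤ ((t.filter P) ∪ (s \ t)).card + (s ∩ t).card :=
        Nat.add_le_add_right (Finset.card_le_card hsub) _
    _ ≤ ((t.filter P).card + (s \ t).card) + (s ∩ t).card :=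
        Nat.add_le_add_right (Finset.card_union_le _ _) _
    _ = (t.filter P).card + s.card := by
        rw [add_assoc, Finset.card_sdiff_add_card_inter]

/-- Affine map of a (bounded) limsup. -/
lemma limsup_affine (u : ℕ → ℝ) (c : ℝ) (hc : 0 < c) (d lo hi : ℝ)
    (h1 : ∀ n, u n ≤ hi) (h0 : ∀ n, lo ≤ u n) :
    limsup (fun n => c * u n + d) atTop = c * limsup u atTop + d := by
  set e : ℝ ≃o ℝ := (OrderIso.mulLeft₀ c hc).trans (OrderIso.addRight d) with he
  have happ : ∀ x : ℝ, e x = c * x + d := fun x => rfl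
  have hbu : IsBoundedUnder (· ≤ ·) atTop u := isBoundedUnder_of ⟨hi, h1⟩
  have hbu' : IsBoundedUnder (· ≥ ·) atTop u := isBoundedUnder_of ⟨lo, h0⟩
  have hcu : IsCoboundedUnder (· ≤ ·) atTop u := hbu'.isCoboundedUnder_le
  have hbe : IsBoundedUnder (· ≤ ·) atTop (fun n => e (u n)) :=
    isBoundedUnder_of ⟨c * hi + d, fun n => by
      rw [happ]; have := h1 n; nlinarith⟩
  have hbe' : IsBoundedUnder (· ≥ ·) atTop (fun n => e (u n)) :=
    isBoundedUnder_of ⟨c * lo + d, fun n => by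
      rw [happ]; have := h0 n; nlinarith⟩
  have hce : IsCoboundedUnder (· ≤ ·) atTop (fun n => e (u n)) := hbe'.isCoboundedUnder_le
  have := e.limsup_apply (u := u) (f := atTop) hbu hcu hbe hce
  rw [happ] at this
  exact this.symm

lemma ratio_nonneg {G : Type*} (s : Finset G) (P : G → Prop) [DecidablePred P] :
    (0:ℝ) ≤ ((s.filter P).card : ℝ) / s.card := by positivity

lemma ratio_le_one {G : Type*} (s : Finset G) (P : G → Prop) [DecidablePred P] :
    ((s.filter P).card : ℝ) / s.card ≤ 1 := by
  rcases Nat.eq_zero_or_pos s.card with h | h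
  · simp [h]
  · rw [div_le_one (by exact_mod_cast h)]
    exact_mod_cast Finset.card_filter_le _ _

/-- Key lemma: along any Følner sequence the density of the disjoint union is twice
the density of `A`. -/
lemma folner_union_eq {G : Type*} [AddCommGroup G] (g : G) (A : Set G)
    (h : A ∩ ((· + g) '' A) = ∅) (Φ : ℕ → Finset G) (hΦ : IsFolner Φ) :
    upperDensAlong Φ (A ∪ ((· + g) '' A)) = 2 * upperDensAlong Φ A := by
  set B : Set G := (· + g) '' A with hB
  have hd : ∀ x, x ∈ A → x ∈ B → False := by
    intro x hx hx'
    have hmem : x ∈ A ∩ B := ⟨hx, hx'⟩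
    rw [h] at hmem
    exact hmem
  set a : ℕ → ℝ := fun n => (((Φ n).filter (· ∈ A)).card : ℝ) / (Φ n).card with ha
  set b : ℕ → ℝ := fun n => (((Φ n).filter (· ∈ B)).card : ℝ) / (Φ n).card with hb
  set s : ℕ → ℝ := fun n =>
    (((((Φ n).image (· + (-g)))) ∩ Φ n).card : ℝ) / (Φ n).card with hs
  have ha0 : ∀ n, 0 ≤ a n := fun n => ratio_nonneg _ _
  have ha1 : ∀ n, a n ≤ 1 := fun n => ratio_le_one _ _
  have hb0 : ∀ n, 0 ≤ b n := fun n => ratio_nonneg _ _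
  have hb1 : ∀ n, b n ≤ 1 := fun n => ratio_le_one _ _
  -- membership in B translated
  have hpred : ∀ x : G, x ∈ B ↔ x + -g ∈ A := by
    intro x
    constructor
    · rintro ⟨y, hy, rfl⟩
      simpa [add_assoc] using hy
    · intro hx
      exact ⟨x + -g, hx, by simp⟩
  -- the count of B in Φ n equals the count of A in the translated set
  have htrans : ∀ n, ((Φ n).filter (· ∈ B)).card
      = (((Φ n).image (· + (-g))).filter (· ∈ A)).card := by
    intro n
    rw [Finset.filter_image]
    rw [Finset.card_image_of_injective _ (add_left_injective (-g))]
    congr 1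
    ext x
    simp only [Finset.mem_filter]
    exact and_congr_right fun _ => hpred x
  -- the two-sided comparison
  have hcomp : ∀ n, b n ≤ a n + (1 - s n) ∧ a n ≤ b n + (1 - s n) := by
    intro n
    set Φ' : Finset G := (Φ n).image (· + (-g)) with hΦ'
    rcases Nat.eq_zero_or_pos (Φ n).card with hN | hN
    · have hempty : Φ n = ∅ := Finset.card_eq_zero.mp hN
      constructor <;> simp [ha, hb, hs, hempty]
    · have hNR : (0:ℝ) < ((Φ n).card : ℝ) := by exact_mod_cast hN
      have hcard' : Φ'.card = (Φ n).card :=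
        Finset.card_image_of_injective _ (add_left_injective (-g))
      have h1 : (Φ'.filter (· ∈ A)).card + (Φ' ∩ Φ n).card
          ≤ ((Φ n).filter (· ∈ A)).card + Φ'.card :=
        count_filter_inter _ _ _
      have h2 : ((Φ n).filter (· ∈ A)).card + (Φ n ∩ Φ').card
          ≤ (Φ'.filter (· ∈ A)).card + (Φ n).card :=
        count_filter_inter _ _ _
      rw [Finset.inter_comm] at h2
      rw [hcard'] at h1
      have hbn : b n = ((Φ'.filter (· ∈ A)).card : ℝ) / (Φ n).card := by
        rw [show b n = (((Φ n).filter (· ∈ B)).card : ℝ) / (Φ n).card from rfl, htrans n]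
      have han : a n = (((Φ n).filter (· ∈ A)).card : ℝ) / (Φ n).card := rfl
      have hsn : s n = ((Φ' ∩ Φ n).card : ℝ) / (Φ n).card := rfl
      have h1R : (((Φ'.filter (· ∈ A)).card : ℝ) + ((Φ' ∩ Φ n).card : ℝ)) / (Φ n).card
          ≤ ((((Φ n).filter (· ∈ A)).card : ℝ) + ((Φ n).card : ℝ)) / (Φ n).card :=
        (div_le_div_iff_of_pos_right hNR).mpr (by exact_mod_cast h1)
      have h2R : ((((Φ n).filter (· ∈ A)).card : ℝ) + ((Φ' ∩ Φ n).card : ℝ)) / (Φ n).card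
          ≤ (((Φ'.filter (· ∈ A)).card : ℝ) + ((Φ n).card : ℝ)) / (Φ n).card :=
        (div_le_div_iff_of_pos_right hNR).mpr (by exact_mod_cast h2)
      rw [add_div, add_div, div_self hNR.ne'] at h1R h2R
      constructor <;> [skip; skip] <;>
        first
        | (rw [hbn, han, hsn] at *; linarith)
  -- Følner property at -g
  have hts : Tendsto s atTop (nhds 1) := hΦ (-g)
  have hdiff : Tendsto (fun n => b n - a n) atTop (nhds 0) := by
    have h1 : Tendsto (fun n => 1 - s n) atTop (nhds 0) := by
      simpa using (tendsto_const_nhds (x := (1:ℝ)) (f := atTop)).sub hts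
    have h2 : Tendsto (fun n => -(1 - s n)) atTop (nhds 0) := by
      simpa using h1.neg
    apply tendsto_of_tendsto_of_tendsto_of_le_of_le h2 h1
    · intro n; have hcn := (hcomp n).2; (try simp only []); linarith
    · intro n; have hcn := (hcomp n).1; (try simp only []); linarith
  -- count of the union splits
  have hunion : ∀ n, (((@Finset.filter G (· ∈ A ∪ B)
      (fun a => Classical.propDecidable (a ∈ A ∪ B)) (Φ n))).card : ℝ) / (Φ n).card
      = a n + b n := by
    intro n
    rw [Finset.filter_congr_decidable]
    have hsplit : (Φ n).filter (· ∈ A ∪ B) = (Φ n).filter (· ∈ A) ∪ (Φ n).filter (· ∈ B) := by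
      ext x
      simp only [Finset.mem_filter, Finset.mem_union, Set.mem_union]
      tauto
    have hdisj : Disjoint ((Φ n).filter (· ∈ A)) ((Φ n).filter (· ∈ B)) := by
      rw [Finset.disjoint_left]
      intro x hx hx'
      simp only [Finset.mem_filter] at hx hx'
      exact hd x hx.2 hx'.2
    rw [hsplit, Finset.card_union_of_disjoint hdisj]
    push_cast
    rw [add_div]
  have hU : upperDensAlong Φ (A ∪ B) = limsup (fun n => a n + b n) atTop := by
    rw [upperDensAlong]
    try simp only [Finset.filter_congr_decidable]
    exact congrArg (fun f => limsup f atTop) (funext hunion)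
  have hA : upperDensAlong Φ A = limsup a atTop := rfl
  rw [hU, hA]
  -- now show limsup (a + b) = 2 * limsup a
  have habL2 : limsup (fun n => 2 * a n) atTop = 2 * limsup a atTop := by
    simpa using limsup_affine a 2 two_pos 0 0 1 ha1 ha0
  apply le_antisymm
  · apply le_of_forall_pos_le_add
    intro ε hε
    have hev : ∀ᶠ n in atTop, a n + b n ≤ 2 * a n + ε := by
      have hev0 := Metric.tendsto_nhds.mp hdiff ε hε
      filter_upwards [hev0] with n hn
      rw [Real.dist_eq, sub_zero] at hn
      have := abs_lt.mp hn
      linarith [this.1, this.2]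
    have hco : IsCoboundedUnder (· ≤ ·) atTop (fun n => a n + b n) :=
      (isBoundedUnder_of ⟨0, fun n => add_nonneg (ha0 n) (hb0 n)⟩ :
        IsBoundedUnder (· ≥ ·) atTop (fun n => a n + b n)).isCoboundedUnder_le
    have hbd : IsBoundedUnder (· ≤ ·) atTop (fun n => 2 * a n + ε) :=
      isBoundedUnder_of ⟨2 * 1 + ε, fun n => by have := ha1 n; (try simp only []); linarith⟩
    calc limsup (fun n => a n + b n) atTop
        ≤ limsup (fun n => 2 * a n + ε) atTop := limsup_le_limsup hev hco hbd
      _ = 2 * limsup a atTop + ε := limsup_affine a 2 two_pos ε 0 1 ha1 ha0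
  · apply le_of_forall_pos_le_add
    intro ε hε
    have hev : ∀ᶠ n in atTop, 2 * a n ≤ (a n + b n) + ε := by
      have hev0 := Metric.tendsto_nhds.mp hdiff ε hε
      filter_upwards [hev0] with n hn
      rw [Real.dist_eq, sub_zero] at hn
      have := abs_lt.mp hn
      linarith [this.1, this.2]
    have hco : IsCoboundedUnder (· ≤ ·) atTop (fun n => 2 * a n) :=
      (isBoundedUnder_of ⟨0, fun n => by have := ha0 n; (try simp only []); linarith⟩ :
        IsBoundedUnder (· ≥ ·) atTop (fun n => 2 * a n)).isCoboundedUnder_le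
    have hbd : IsBoundedUnder (· ≤ ·) atTop (fun n => (a n + b n) + ε) :=
      isBoundedUnder_of ⟨2 + ε, fun n => by have := ha1 n; have := hb1 n; (try simp only []); linarith⟩
    have e2 : limsup (fun n => (a n + b n) + ε) atTop
        = limsup (fun n => a n + b n) atTop + ε := by
      have := limsup_affine (fun n => a n + b n) 1 one_pos ε 0 2
        (fun n => by have := ha1 n; have := hb1 n; (try simp only []); linarith)
        (fun n => add_nonneg (ha0 n) (hb0 n))
      simpa using this
    calc 2 * limsup a atTop = limsup (fun n => 2 * a n) atTop := habL2.symm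
      _ ≤ limsup (fun n => (a n + b n) + ε) atTop := limsup_le_limsup hev hco hbd
      _ = limsup (fun n => a n + b n) atTop + ε := e2

theorem stmt0 {G : Type*} [AddCommGroup G] [Countable G] (g : G) (A : Set G)
    (h : A ∩ ((· + g) '' A) = ∅) :
    banachDensity (A ∪ ((· + g) '' A)) = 2 * banachDensity A := by
  have key := folner_union_eq g A h
  unfold banachDensity
  have hset : {d | ∃ Φ : ℕ → Finset G, IsFolner Φ ∧ d = upperDensAlong Φ (A ∪ ((· + g) '' A))}
      = (2:ℝ) • {d | ∃ Φ : ℕ → Finset G, IsFolner Φ ∧ d = upperDensAlong Φ A} := by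
    ext x
    simp only [Set.mem_setOf_eq, Set.mem_smul_set, smul_eq_mul]
    constructor
    · rintro ⟨Φ, hΦ, rfl⟩
      exact ⟨upperDensAlong Φ A, ⟨Φ, hΦ, rfl⟩, (key Φ hΦ).symm⟩
    · rintro ⟨y, ⟨Φ, hΦ, rfl⟩, rfl⟩
      exact ⟨Φ, hΦ, (key Φ hΦ).symm⟩
  rw [hset, Real.sSup_smul_of_nonneg (by norm_num), smul_eq_mul]
end

section
/- Let $k < n$ be natural numbers and let $G$ be the group of functions from $\{0,1\}^n$ to $\mathbb{Z}/2\mathbb{Z}$ under pointwise addition. Let $U(n,m)$ denote the Hamming ball $\{g \in G : |\{\tau : g(\tau) \neq 0\}| \leq m\}$. If $G = \bigcup_{j=1}^k A_j$, then for some $j \leq k$ the set $(A_j - A_j) \cap U(n, 2k+2)$ is not contained in $\{0\}$; i.e., there exist $a \neq b \in A_j$ with $a - b \in U(n, 2k+2)$. -/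
theorem stmt1 (n k : ℕ) (hkn : k < n)
    (A : Fin k → Set ((Fin n → Bool) → ZMod 2))
    (hcover : ∀ g : (Fin n → Bool) → ZMod 2, ∃ j, g ∈ A j) :
    ∃ j : Fin k, ∃ a ∈ A j, ∃ b ∈ A j, a ≠ b ∧
      (Finset.univ.filter (fun τ : Fin n → Bool => (a - b) τ ≠ 0)).card ≤ 2 * k + 2 := by
  -- distinct points of the hypercube
  set τ : Fin (k + 1) → (Fin n → Bool) := fun i m => decide (m.val ≤ i.val) with hτ
  have hτinj : Function.Injective τ := by
    intro i i' h
    by_contra hne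
    rcases Nat.lt_or_ge i.val i'.val with hlt | hge
    · have hm : (i' : ℕ) < n := lt_of_lt_of_le i'.isLt (by omega)
      have := congrFun h ⟨i', hm⟩
      simp [hτ] at this
      omega
    · have hlt : i'.val < i.val := by
        rcases Nat.lt_or_ge i'.val i.val with h' | h'
        · exact h'
        · exact absurd (Fin.ext (le_antisymm h' hge)) hne
      have hm : (i : ℕ) < n := lt_of_lt_of_le i.isLt (by omega)
      have := congrFun h ⟨i, hm⟩
      simp [hτ] at this
      omega
  -- indicator functions
  set g : Fin (k + 1) → ((Fin n → Bool) → ZMod 2) :=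
    fun i σ => if σ = τ i then 1 else 0 with hg
  have hginj : Function.Injective g := by
    intro i i' h
    by_contra hne
    have := congrFun h (τ i)
    simp [hg, hτinj.ne hne] at this
  choose f hf using fun i => hcover (g i)
  obtain ⟨i, i', hne, hfi⟩ : ∃ i i', i ≠ i' ∧ f i = f i' := by
    have : Fintype.card (Fin k) < Fintype.card (Fin (k + 1)) := by simp
    obtain ⟨i, i', hne, h⟩ := Fintype.exists_ne_map_eq_of_card_lt f this
    exact ⟨i, i', hne, h⟩
  refine ⟨f i, g i, hf i, g i', hfi ▸ hf i', hginj.ne hne, ?_⟩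
  have hsub : (Finset.univ.filter (fun σ : Fin n → Bool => (g i - g i') σ ≠ 0)) ⊆
      {τ i, τ i'} := by
    intro σ hσ
    simp only [Finset.mem_filter, Finset.mem_univ, true_and] at hσ
    simp only [Finset.mem_insert, Finset.mem_singleton]
    by_contra hc
    push_neg at hc
    simp [hg, Pi.sub_apply, hc.1, hc.2] at hσ
  calc (Finset.univ.filter (fun σ : Fin n → Bool => (g i - g i') σ ≠ 0)).card
      ≤ ({τ i, τ i'} : Finset _).card := Finset.card_le_card hsub
    _ ≤ 2 := Finset.card_insert_le _ _ |>.trans (by simp)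
    _ ≤ 2 * k + 2 := by omega
end

section
/- Fix $k < n$ and let $G = (\mathbb{Z}/2\mathbb{Z})^{\{0,1\}^n}$. For any $g \in G$ and any partition $G = \bigcup_{j=1}^k A_j$, there exist $j \leq k$ and $a \neq b \in A_j$ such that $a - b \in g + U(n, 3k+3)$, where $U(n,m)$ is the Hamming ball of radius $m$ around $0$. -/
/-!
Let `D` be the support of `g` and pad it to a set `E` of `max #D (k + 1)` points of the cube.
Colour each `r`-subset `S ⊆ E` by a part containing its indicator. For `2r + k ≤ #E + 1` the
Lovász–Kneser theorem gives disjoint `r`-sets `S`, `T` in the same part; the difference of their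
indicators is the indicator of `S ∪ T`, which differs from `g` only on `E \ (S ∪ T)` and on
`E \ D`, i.e. on at most `2k + 1` points.

Lovász–Kneser follows from Tucker's lemma through Matoušek's labelling of signed sets, and
Tucker's lemma from Fan's parity argument: for every `L` up to the dimension, the number of signed
permutations of length `L` whose chain of signed sets carries alternating labels is odd.
-/

open Finset

namespace LovaszKneser

def HasSign (ε : Bool) (a : ℤ) : Prop := if ε then 0 < a else a < 0

lemma HasSign.neg {ε : Bool} {a : ℤ} (h : HasSign ε a) : HasSign (!ε) (-a) := by
  cases ε <;> simpa [HasSign] using h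

def AlternatingList : Bool → List ℤ → Prop
  | _, [] => True
  | ε, a :: l => HasSign ε a ∧ (∀ b ∈ l, |a| < |b|) ∧ AlternatingList (!ε) l

def Alternating (ε : Bool) (M : Multiset ℤ) : Prop :=
  ∃ l : List ℤ, AlternatingList ε l ∧ M = l

lemma alternating_zero (ε : Bool) : Alternating ε 0 := ⟨[], trivial, rfl⟩

lemma AlternatingList.map_neg {ε : Bool} {l : List ℤ} (h : AlternatingList ε l) :
    AlternatingList (!ε) (l.map Neg.neg) := by
  induction l generalizing ε with
  | nil => trivial
  | cons a l ih =>
    obtain ⟨ha, hlt, hl⟩ := h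
    exact ⟨ha.neg, fun b hb => by simpa using hlt (-b) (by simpa using hb), ih hl⟩

lemma Alternating.map_neg {ε : Bool} {M : Multiset ℤ} (h : Alternating ε M) :
    Alternating (!ε) (M.map Neg.neg) := by
  obtain ⟨l, hl, rfl⟩ := h
  exact ⟨_, hl.map_neg, rfl⟩

lemma alternating_map_neg_iff {ε : Bool} {M : Multiset ℤ} :
    Alternating (!ε) (M.map Neg.neg) ↔ Alternating ε M :=
  ⟨fun h => by simpa [Multiset.map_map] using h.map_neg, Alternating.map_neg⟩

lemma AlternatingList.pairwise_abs_lt {ε : Bool} {l : List ℤ} (h : AlternatingList ε l) :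
    l.Pairwise (fun a b => |a| < |b|) := by
  induction l generalizing ε with
  | nil => exact List.Pairwise.nil
  | cons a l ih => exact List.pairwise_cons.2 ⟨h.2.1, ih h.2.2⟩

lemma Alternating.nodup {ε : Bool} {M : Multiset ℤ} (h : Alternating ε M) : M.Nodup := by
  obtain ⟨l, hl, rfl⟩ := h
  exact Multiset.coe_nodup.2 (hl.pairwise_abs_lt.imp fun hab heq => by simp [heq] at hab)

lemma not_alternating_cons_cons (ε : Bool) (a : ℤ) (M : Multiset ℤ) :
    ¬ Alternating ε (a ::ₘ a ::ₘ M) := fun h =>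
  (Multiset.nodup_cons.1 h.nodup).1 (Multiset.mem_cons_self a M)

lemma Alternating.card_le {ε : Bool} {M : Multiset ℤ} {N : ℕ} (h : Alternating ε M)
    (hM : ∀ x ∈ M, x ≠ 0 ∧ |x| ≤ N) : M.card ≤ N := by
  obtain ⟨l, hl, rfl⟩ := h
  have hnd : (l.map Int.natAbs).Nodup :=
    (List.pairwise_map.2 (hl.pairwise_abs_lt.imp fun hab => by
      rwa [Int.abs_eq_natAbs, Int.abs_eq_natAbs, Nat.cast_lt] at hab)).imp ne_of_lt
  calc (l : Multiset ℤ).card = (l.map Int.natAbs).toFinset.card := by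
        rw [List.toFinset_card_of_nodup hnd, List.length_map, Multiset.coe_card]
    _ ≤ (Icc 1 N).card := card_le_card fun x hx => by
        obtain ⟨y, hy, rfl⟩ := List.mem_map.1 (List.mem_toFinset.1 hx)
        obtain ⟨hy0, hyN⟩ := hM y (by simpa using hy)
        rw [Int.abs_eq_natAbs, Nat.cast_le] at hyN
        exact mem_Icc.2 ⟨Int.natAbs_pos.2 hy0, hyN⟩
    _ = N := by simp

lemma alternating_cons_iff {ε : Bool} {a : ℤ} {M : Multiset ℤ} (hlt : ∀ b ∈ M, |a| < |b|) :
    Alternating ε (a ::ₘ M) ↔ HasSign ε a ∧ Alternating (!ε) M := by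
  constructor
  · rintro ⟨_ | ⟨x, l⟩, hl, hM⟩
    · simp at hM
    obtain ⟨hx, hxl, hl⟩ := hl
    have hxa : x = a := by
      by_contra hxa
      have hxM : x ∈ M := by
        simpa [hxa] using (show x ∈ a ::ₘ M by rw [hM]; simp)
      have hal : a ∈ l := by
        simpa [Ne.symm hxa] using (show a ∈ (x :: l : Multiset ℤ) by rw [← hM]; simp)
      exact absurd (hlt x hxM) (not_lt.2 (hxl a hal).le)
    subst hxa
    exact ⟨hx, l, hl, (Multiset.cons_inj_right x).1 (by simpa using hM)⟩
  · rintro ⟨ha, l, hl, rfl⟩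
    exact ⟨a :: l, ⟨ha, fun b hb => hlt b (by simpa using hb), hl⟩, rfl⟩

open scoped Classical in
noncomputable def ind (P : Prop) : ZMod 2 := if P then 1 else 0

lemma ind_pos {P : Prop} (h : P) : ind P = 1 := if_pos h

lemma ind_neg {P : Prop} (h : ¬ P) : ind P = 0 := if_neg h

lemma ind_ne_zero_iff {P : Prop} : ind P ≠ 0 ↔ P := by
  by_cases hP : P <;> simp [ind, hP]

lemma ind_and (P Q : Prop) : ind (P ∧ Q) = ind P * ind Q := by
  by_cases hP : P <;> by_cases hQ : Q <;> simp [ind, hP, hQ]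

lemma ind_eq_ind_and_add_ind_and_not (P Q : Prop) : ind Q = ind (Q ∧ P) + ind (Q ∧ ¬ P) := by
  by_cases hQ : Q <;> by_cases hP : P <;> simp [ind, hP, hQ]

lemma ind_alternating_cons {ε : Bool} {a : ℤ} {M : Multiset ℤ} (hlt : ∀ b ∈ M, |a| < |b|) :
    ind (Alternating ε (a ::ₘ M)) = ind (HasSign ε a) * ind (Alternating (!ε) M) := by
  rw [alternating_cons_iff hlt, ind_and]

lemma sum_ind_alternating_erase_cons_cons (ε : Bool) (a : ℤ) (K : Multiset ℤ) :
    ((a ::ₘ a ::ₘ K).map fun x => ind (Alternating ε ((a ::ₘ a ::ₘ K).erase x))).sum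
      = 0 := by
  have hK : ∀ x ∈ K, ind (Alternating ε ((a ::ₘ a ::ₘ K).erase x)) = 0 := fun x hx => by
    rw [Multiset.erase_cons_tail_of_mem (Multiset.mem_cons_of_mem hx),
      Multiset.erase_cons_tail_of_mem hx]
    exact ind_neg (not_alternating_cons_cons ε a _)
  rw [Multiset.map_cons, Multiset.map_cons, Multiset.sum_cons, Multiset.sum_cons, ← add_assoc,
    CharTwo.add_self_eq_zero, zero_add, Multiset.sum_eq_zero]
  simpa using hK

/-- Fan's parity identity. Induction on the entry of least absolute value, which heads every
alternating arrangement; an entry of least absolute value occurring twice kills every term. -/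
theorem sum_ind_alternating_erase (ε : Bool) (M : Multiset ℤ)
    (hM : ∀ x ∈ M, ∀ y ∈ M, x + y ≠ 0) :
    (M.map fun x => ind (Alternating ε (M.erase x))).sum
      = ind (Alternating true M) + ind (Alternating false M) := by
  induction M using Multiset.strongInductionOn generalizing ε with
  | ih M ih =>
  rcases eq_or_ne M 0 with rfl | hM0
  · simp [ind_pos (alternating_zero _), CharTwo.add_self_eq_zero]
  obtain ⟨a, haM, hmin⟩ := Multiset.exists_min_image (fun x : ℤ => |x|) hM0
  obtain ⟨M, rfl⟩ := Multiset.exists_cons_of_mem haM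
  by_cases hdup : a ∈ M
  · obtain ⟨K, rfl⟩ := Multiset.exists_cons_of_mem hdup
    rw [sum_ind_alternating_erase_cons_cons, ind_neg (not_alternating_cons_cons _ _ _),
      ind_neg (not_alternating_cons_cons _ _ _), add_zero]
  have hlt : ∀ b ∈ M, |a| < |b| := fun b hb => by
    refine lt_of_le_of_ne (hmin b (Multiset.mem_cons_of_mem hb)) fun habs => ?_
    rcases abs_eq_abs.1 habs with rfl | rfl
    · exact hdup hb
    · exact hM _ haM _ (Multiset.mem_cons_of_mem hb) (neg_add_cancel _)
  have hsub : ∀ x ∈ M, ind (Alternating ε ((a ::ₘ M).erase x))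
      = ind (HasSign ε a) * ind (Alternating (!ε) (M.erase x)) := fun x hx => by
    rw [Multiset.erase_cons_tail_of_mem hx,
      ind_alternating_cons fun b hb => hlt b (Multiset.mem_of_mem_erase hb)]
  have hM' : ∀ x ∈ M, ∀ y ∈ M, x + y ≠ 0 := fun x hx y hy =>
    hM x (Multiset.mem_cons_of_mem hx) y (Multiset.mem_cons_of_mem hy)
  rw [Multiset.map_cons, Multiset.sum_cons, Multiset.erase_cons_head, Multiset.map_congr rfl hsub,
    Multiset.sum_map_mul_left, ih M (Multiset.lt_cons_self M a) (!ε) hM',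
    ind_alternating_cons hlt, ind_alternating_cons hlt]
  have ha0 : a ≠ 0 := fun h => hM a haM a haM (by simp [h])
  rcases ha0.lt_or_gt with ha | ha <;> cases ε <;>
    simp [HasSign, ha, not_lt_of_gt ha, ind_pos, ind_neg] <;> grind

section Tucker

variable {m N L : ℕ} {lab : Finset (Fin m) → Finset (Fin m) → ℤ}

/-- A pair `(A, B)` of disjoint sets, not both empty, is a signed set with positive part `A`; the
signed sets are the vertices of the barycentric subdivision of the boundary of the
`m`-dimensional cross-polytope, and `lab` is a labelling of them by `±1, …, ±N`. -/
structure IsTuckerLabelling (N : ℕ) (lab : Finset (Fin m) → Finset (Fin m) → ℤ) : Prop where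
  antipodal : ∀ A B, Disjoint A B → (A ∪ B).Nonempty → lab B A = -lab A B
  add_ne_zero : ∀ A B A' B', Disjoint A' B' → (A ∪ B).Nonempty → A ⊆ A' → B ⊆ B' →
    lab A' B' + lab A B ≠ 0
  abs_le : ∀ A B, Disjoint A B → (A ∪ B).Nonempty → |lab A B| ≤ N

/-- A word `w` with distinct letters encodes a simplex of the subdivision: the chain of signed
sets formed, for each position `q`, by its signed letters at positions `≥ q`. -/
def tailSet (w : Fin L → Fin m × Bool) (q : Fin L) (s : Bool) : Finset (Fin m) :=
  (univ.filter fun i => q ≤ i ∧ (w i).2 = s).image fun i => (w i).1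

lemma mem_tailSet {w : Fin L → Fin m × Bool} {q : Fin L} {s : Bool} {x : Fin m} :
    x ∈ tailSet w q s ↔ ∃ i, q ≤ i ∧ (w i).2 = s ∧ (w i).1 = x := by
  simp [tailSet, and_assoc]

lemma disjoint_tailSet {w : Fin L → Fin m × Bool} (hw : Function.Injective (Prod.fst ∘ w))
    (q : Fin L) : Disjoint (tailSet w q true) (tailSet w q false) := by
  refine Finset.disjoint_left.2 fun x hx hx' => ?_
  obtain ⟨i, -, hi, rfl⟩ := mem_tailSet.1 hx
  obtain ⟨j, -, hj, hji⟩ := mem_tailSet.1 hx'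
  obtain rfl : j = i := hw hji
  simp [hi] at hj

lemma tailSet_union_nonempty (w : Fin L → Fin m × Bool) (q : Fin L) :
    (tailSet w q true ∪ tailSet w q false).Nonempty :=
  ⟨(w q).1, Finset.mem_union.2 <| by
    cases h : (w q).2
    exacts [Or.inr (mem_tailSet.2 ⟨q, le_rfl, h, rfl⟩),
      Or.inl (mem_tailSet.2 ⟨q, le_rfl, h, rfl⟩)]⟩

lemma tailSet_anti (w : Fin L → Fin m × Bool) {q q' : Fin L} (h : q ≤ q') (s : Bool) :
    tailSet w q' s ⊆ tailSet w q s := fun _ hx => by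
  obtain ⟨i, hi, his, hix⟩ := mem_tailSet.1 hx
  exact mem_tailSet.2 ⟨i, h.trans hi, his, hix⟩

variable (lab) in
def tailLabel (w : Fin L → Fin m × Bool) (q : Fin L) : ℤ :=
  lab (tailSet w q true) (tailSet w q false)

variable (lab) in
def chainLabels (w : Fin L → Fin m × Bool) : Multiset ℤ :=
  univ.val.map (tailLabel lab w)

variable (lab) in
def chainLabelsExcept (w : Fin L → Fin m × Bool) (t : Fin L) : Multiset ℤ :=
  (univ.erase t).val.map (tailLabel lab w)

lemma IsTuckerLabelling.add_ne_zero_of_mem_chainLabels (H : IsTuckerLabelling N lab)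
    {w : Fin L → Fin m × Bool} (hw : Function.Injective (Prod.fst ∘ w)) :
    ∀ x ∈ chainLabels lab w, ∀ y ∈ chainLabels lab w, x + y ≠ 0 := by
  have key : ∀ q q' : Fin L, q ≤ q' → tailLabel lab w q + tailLabel lab w q' ≠ 0 :=
    fun q q' h => H.add_ne_zero _ _ _ _ (disjoint_tailSet hw q) (tailSet_union_nonempty w q')
      (tailSet_anti w h true) (tailSet_anti w h false)
  simp only [chainLabels, Multiset.mem_map, Finset.mem_val, Finset.mem_univ, true_and]
  rintro _ ⟨q, rfl⟩ _ ⟨q', rfl⟩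
  rcases le_total q q' with h | h
  · exact key q q' h
  · rw [add_comm]; exact key q' q h

lemma chainLabels_erase (w : Fin L → Fin m × Bool) (t : Fin L) :
    (chainLabels lab w).erase (tailLabel lab w t) = chainLabelsExcept lab w t := by
  have hcons : (univ : Finset (Fin L)).val = t ::ₘ (univ.erase t).val := by
    rw [Finset.erase_val, Multiset.cons_erase (Finset.mem_univ_val t)]
  rw [chainLabels, chainLabelsExcept, hcons, Multiset.map_cons, Multiset.erase_cons_head]

lemma IsTuckerLabelling.sum_ind_alternating_chainLabelsExcept (H : IsTuckerLabelling N lab)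
    {w : Fin L → Fin m × Bool} (hw : Function.Injective (Prod.fst ∘ w)) :
    ∑ t, ind (Alternating true (chainLabelsExcept lab w t))
      = ind (Alternating true (chainLabels lab w))
        + ind (Alternating false (chainLabels lab w)) := by
  rw [← sum_ind_alternating_erase true _ (H.add_ne_zero_of_mem_chainLabels hw), chainLabels,
    Multiset.map_map, Finset.sum]
  exact congrArg Multiset.sum (Multiset.map_congr rfl fun t _ => by
    simp only [Function.comp_apply]; rw [← chainLabels, chainLabels_erase])

def IsSignedPerm (w : Fin L → Fin m × Bool) : Prop :=
  Function.Injective (Prod.fst ∘ w) ∧ ∀ i, ((w i).1 : ℕ) < L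

def TopLetterPos (w : Fin (L + 1) → Fin m × Bool) : Prop :=
  ∀ i, ((w i).1 : ℕ) = L → (w i).2 = true

variable (lab) in
noncomputable def fanCount (L : ℕ) : ZMod 2 :=
  ∑ w : Fin L → Fin m × Bool, ind (IsSignedPerm w) * ind (Alternating true (chainLabels lab w))

lemma IsSignedPerm.exists_letter {w : Fin L → Fin m × Bool} (hw : IsSignedPerm w) {v : ℕ}
    (hv : v < L) : ∃ i, ((w i).1 : ℕ) = v := by
  let φ : Fin L → Fin L := fun i => ⟨(w i).1, hw.2 i⟩
  have hφ : Function.Injective φ := fun i j h => hw.1 (Fin.ext (Fin.mk.inj_iff.1 h))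
  obtain ⟨i, hi⟩ := Finite.surjective_of_injective hφ ⟨v, hv⟩
  exact ⟨i, Fin.mk.inj_iff.1 hi⟩

lemma IsSignedPerm.topLetterPos_iff {w : Fin (L + 1) → Fin m × Bool} (hw : IsSignedPerm w)
    {i₀ : Fin (L + 1)} (hi₀ : ((w i₀).1 : ℕ) = L) : TopLetterPos w ↔ (w i₀).2 = true :=
  ⟨fun h => h i₀ hi₀, fun h i hi => by
    rwa [hw.1 (show (w i).1 = (w i₀).1 from Fin.ext (hi.trans hi₀.symm))]⟩

def flipSigns (w : Fin L → Fin m × Bool) : Fin L → Fin m × Bool :=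
  fun i => ((w i).1, !(w i).2)

lemma flipSigns_flipSigns (w : Fin L → Fin m × Bool) : flipSigns (flipSigns w) = w := by
  funext i
  simp [flipSigns]

lemma isSignedPerm_flipSigns {w : Fin L → Fin m × Bool} :
    IsSignedPerm (flipSigns w) ↔ IsSignedPerm w := Iff.rfl

lemma topLetterPos_flipSigns {w : Fin (L + 1) → Fin m × Bool} (hw : IsSignedPerm w) :
    TopLetterPos (flipSigns w) ↔ ¬ TopLetterPos w := by
  obtain ⟨i₀, hi₀⟩ := hw.exists_letter (Nat.lt_succ_self L)
  rw [hw.topLetterPos_iff hi₀, (isSignedPerm_flipSigns.2 hw).topLetterPos_iff hi₀]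
  simp [flipSigns]

lemma tailSet_flipSigns (w : Fin L → Fin m × Bool) (q : Fin L) (s : Bool) :
    tailSet (flipSigns w) q s = tailSet w q (!s) := by
  ext x
  simp only [mem_tailSet, flipSigns, Bool.not_eq_eq_eq_not]

lemma IsTuckerLabelling.chainLabels_flipSigns (H : IsTuckerLabelling N lab)
    {w : Fin L → Fin m × Bool} (hw : Function.Injective (Prod.fst ∘ w)) :
    chainLabels lab (flipSigns w) = (chainLabels lab w).map Neg.neg := by
  rw [chainLabels, chainLabels, Multiset.map_map]
  refine Multiset.map_congr rfl fun q _ => ?_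
  rw [Function.comp_apply, tailLabel, tailLabel, tailSet_flipSigns, tailSet_flipSigns]
  exact H.antipodal _ _ (disjoint_tailSet hw q) (tailSet_union_nonempty w q)

lemma IsTuckerLabelling.fanCount_succ_eq_sum_topLetterPos (H : IsTuckerLabelling N lab) :
    fanCount lab (L + 1) = ∑ w : Fin (L + 1) → Fin m × Bool,
      ind (IsSignedPerm w ∧ TopLetterPos w)
        * (ind (Alternating true (chainLabels lab w))
          + ind (Alternating false (chainLabels lab w))) := by
  have hflip : ∑ w : Fin (L + 1) → Fin m × Bool,
        ind (IsSignedPerm w ∧ ¬ TopLetterPos w) * ind (Alternating true (chainLabels lab w))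
      = ∑ w : Fin (L + 1) → Fin m × Bool,
        ind (IsSignedPerm w ∧ TopLetterPos w) * ind (Alternating false (chainLabels lab w)) := by
    refine Fintype.sum_bijective _ (Function.Involutive.bijective flipSigns_flipSigns) _ _
      fun w => ?_
    by_cases hw : IsSignedPerm w
    · rw [isSignedPerm_flipSigns, topLetterPos_flipSigns hw, H.chainLabels_flipSigns hw.1,
        ← Bool.not_true, alternating_map_neg_iff]
    · simp [ind_neg, hw, isSignedPerm_flipSigns]
  calc fanCount lab (L + 1)
      = ∑ w : Fin (L + 1) → Fin m × Bool,
          (ind (IsSignedPerm w ∧ TopLetterPos w) * ind (Alternating true (chainLabels lab w))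
          + ind (IsSignedPerm w ∧ ¬ TopLetterPos w)
            * ind (Alternating true (chainLabels lab w))) := by
        simp only [fanCount, ← add_mul, ← ind_eq_ind_and_add_ind_and_not]
    _ = _ := by rw [Finset.sum_add_distrib, hflip, ← Finset.sum_add_distrib]; simp only [mul_add]

lemma tailSet_comp_perm (w : Fin L → Fin m × Bool) (e : Equiv.Perm (Fin L)) {q : Fin L}
    (he : ∀ i, q ≤ e i ↔ q ≤ i) (s : Bool) : tailSet (w ∘ e) q s = tailSet w q s := by
  ext x
  simp only [mem_tailSet, Function.comp_apply]
  constructor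
  · rintro ⟨i, hi, his, hix⟩
    exact ⟨e i, (he i).2 hi, his, hix⟩
  · rintro ⟨j, hj, hjs, hjx⟩
    exact ⟨e.symm j, (he _).1 (by rwa [e.apply_symm_apply]), by simpa using hjs,
      by simpa using hjx⟩

lemma le_swap_apply_iff (t : Fin L) {q : Fin (L + 1)} (hq : q ≠ t.succ) (i : Fin (L + 1)) :
    q ≤ Equiv.swap t.castSucc t.succ i ↔ q ≤ i := by
  have hqv : (q : ℕ) ≠ t + 1 := fun h => hq (Fin.ext h)
  rcases eq_or_ne i t.castSucc with rfl | h₁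
  · rw [Equiv.swap_apply_left, Fin.le_def, Fin.le_def, Fin.val_succ, Fin.val_castSucc]
    omega
  rcases eq_or_ne i t.succ with rfl | h₂
  · rw [Equiv.swap_apply_right, Fin.le_def, Fin.le_def, Fin.val_succ, Fin.val_castSucc]
    omega
  rw [Equiv.swap_apply_of_ne_of_ne h₁ h₂]

lemma chainLabelsExcept_comp_swap (w : Fin (L + 1) → Fin m × Bool) (t : Fin L) :
    chainLabelsExcept lab (w ∘ Equiv.swap t.castSucc t.succ) t.succ
      = chainLabelsExcept lab w t.succ := by
  refine Multiset.map_congr rfl fun q (hq : q ∈ univ.erase t.succ) => ?_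
  have hq : q ≠ t.succ := (Finset.mem_erase.1 hq).1
  simp only [tailLabel, tailSet_comp_perm w _ (le_swap_apply_iff t hq)]

lemma isSignedPerm_comp_perm (w : Fin L → Fin m × Bool) (e : Equiv.Perm (Fin L)) :
    IsSignedPerm (w ∘ e) ↔ IsSignedPerm w :=
  and_congr (Equiv.injective_comp e (Prod.fst ∘ w))
    (e.forall_congr_right (q := fun i => ((w i).1 : ℕ) < L))

lemma topLetterPos_comp_perm (w : Fin (L + 1) → Fin m × Bool) (e : Equiv.Perm (Fin (L + 1))) :
    TopLetterPos (w ∘ e) ↔ TopLetterPos w :=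
  e.forall_congr_right (q := fun i => ((w i).1 : ℕ) = L → (w i).2 = true)

/-- Swapping the letters at positions `t` and `t + 1` does not change the chain away from
position `t + 1`, so these terms cancel in pairs. -/
lemma sum_ind_alternating_chainLabelsExcept_succ :
    ∑ w : Fin (L + 1) → Fin m × Bool, ∑ t : Fin L, ind (IsSignedPerm w ∧ TopLetterPos w)
      * ind (Alternating true (chainLabelsExcept lab w t.succ)) = 0 := by
  rw [← Fintype.sum_prod_type']
  refine Finset.sum_involution (fun p _ => (p.1 ∘ Equiv.swap p.2.castSucc p.2.succ, p.2))
    (fun ⟨w, t⟩ _ => ?_) (fun ⟨w, t⟩ _ hne => ?_) (fun _ _ => Finset.mem_univ _)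
    (fun ⟨w, t⟩ _ => by ext1 <;> simp [funext_iff, Equiv.swap_apply_self])
  · rw [chainLabelsExcept_comp_swap, isSignedPerm_comp_perm, topLetterPos_comp_perm,
      CharTwo.add_self_eq_zero]
  · have hw : IsSignedPerm w := by
      by_contra hw
      simp [ind_neg, hw] at hne
    intro hfix
    have h := congrFun (congrArg Prod.fst hfix) t.castSucc
    simp only [Function.comp_apply, Equiv.swap_apply_left] at h
    exact Fin.castSucc_lt_succ.ne (hw.1 (congrArg Prod.fst h)).symm

lemma tailSet_cons_succ (a : Fin m × Bool) (g : Fin L → Fin m × Bool) (q : Fin L) (s : Bool) :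
    tailSet (Fin.cons a g : Fin (L + 1) → Fin m × Bool) q.succ s = tailSet g q s := by
  ext x
  simp only [mem_tailSet, Fin.exists_fin_succ, Fin.cons_zero, Fin.cons_succ, Fin.succ_le_succ_iff,
    Fin.le_zero_iff, Fin.succ_ne_zero, false_and, false_or]

lemma chainLabelsExcept_cons_zero (a : Fin m × Bool) (g : Fin L → Fin m × Bool) :
    chainLabelsExcept lab (Fin.cons a g : Fin (L + 1) → Fin m × Bool) 0 = chainLabels lab g := by
  have herase : (univ : Finset (Fin (L + 1))).erase 0 = univ.map (Fin.succEmb L) := by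
    ext i
    cases i using Fin.cases <;> simp [Fin.succ_ne_zero]
  rw [chainLabelsExcept, chainLabels, herase, Finset.map_val, Multiset.map_map]
  refine Multiset.map_congr rfl fun q _ => ?_
  simp only [Function.comp_apply, Fin.coe_succEmb, tailLabel, tailSet_cons_succ]

lemma isSignedPerm_cons_iff (v : Fin m) (s : Bool) (g : Fin L → Fin m × Bool) :
    IsSignedPerm (Fin.cons (v, s) g : Fin (L + 1) → Fin m × Bool) ↔
      (v : ℕ) < L + 1 ∧ (∀ i, (g i).1 ≠ v) ∧ Function.Injective (Prod.fst ∘ g) ∧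
        ∀ i, ((g i).1 : ℕ) < L + 1 := by
  simp only [IsSignedPerm, Fin.comp_cons, Fin.cons_injective_iff, Fin.forall_fin_succ,
    Fin.cons_zero, Fin.cons_succ, Set.mem_range, Function.comp_apply, not_exists]
  tauto

lemma topLetterPos_cons_iff (v : Fin m) (s : Bool) (g : Fin L → Fin m × Bool) :
    TopLetterPos (Fin.cons (v, s) g : Fin (L + 1) → Fin m × Bool) ↔
      ((v : ℕ) = L → s = true) ∧ ∀ i, ((g i).1 : ℕ) = L → (g i).2 = true := by
  simp only [TopLetterPos, Fin.forall_fin_succ, Fin.cons_zero, Fin.cons_succ]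

lemma isSignedPerm_cons_top_iff {v : Fin m} (hv : (v : ℕ) = L) (s : Bool)
    (g : Fin L → Fin m × Bool) :
    IsSignedPerm (Fin.cons (v, s) g : Fin (L + 1) → Fin m × Bool) ↔ IsSignedPerm g := by
  rw [isSignedPerm_cons_iff, IsSignedPerm]
  have hlt : ∀ i, (g i).1 ≠ v ∧ ((g i).1 : ℕ) < L + 1 ↔ ((g i).1 : ℕ) < L := fun i => by
    rw [Ne, Fin.ext_iff, hv]
    omega
  simp only [← hlt, forall_and, hv, Nat.lt_succ_self, true_and]
  tauto

/-- Only the letter `(L, true)` can be prepended to a signed permutation to give one with positive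
top letter; for any other letter the two signs cancel. -/
lemma sum_ind_cons_isSignedPerm_topLetterPos (hL : L < m) (g : Fin L → Fin m × Bool) :
    ∑ a : Fin m × Bool, ind (IsSignedPerm (Fin.cons a g : Fin (L + 1) → Fin m × Bool)
      ∧ TopLetterPos (Fin.cons a g : Fin (L + 1) → Fin m × Bool)) = ind (IsSignedPerm g) := by
  rw [Fintype.sum_prod_type, Finset.sum_eq_single ⟨L, hL⟩ (fun v _ hv => ?_) (by simp),
    Fintype.sum_bool]
  · simp only [isSignedPerm_cons_top_iff rfl, topLetterPos_cons_iff]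
    by_cases hg : IsSignedPerm g
    · simp [hg, ind_pos, ind_neg, fun i => (hg.2 i).ne]
    · simp [hg, ind_neg]
  · have hv : (v : ℕ) ≠ L := fun h => hv (Fin.ext h)
    rw [Fintype.sum_bool]
    simp only [isSignedPerm_cons_iff, topLetterPos_cons_iff, hv, false_imp_iff, true_and]
    exact CharTwo.add_self_eq_zero _

lemma sum_ind_alternating_chainLabelsExcept_zero (hL : L < m) :
    ∑ w : Fin (L + 1) → Fin m × Bool, ind (IsSignedPerm w ∧ TopLetterPos w)
      * ind (Alternating true (chainLabelsExcept lab w 0)) = fanCount lab L := by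
  rw [← (Fin.consEquiv fun _ => Fin m × Bool).sum_comp, Fintype.sum_prod_type, Finset.sum_comm,
    fanCount]
  refine Finset.sum_congr rfl fun g _ => ?_
  simp only [Fin.consEquiv, Equiv.coe_fn_mk, chainLabelsExcept_cons_zero, ← Finset.sum_mul,
    sum_ind_cons_isSignedPerm_topLetterPos hL]

lemma IsTuckerLabelling.fanCount_succ (H : IsTuckerLabelling N lab) (hL : L < m) :
    fanCount lab (L + 1) = fanCount lab L := by
  rw [H.fanCount_succ_eq_sum_topLetterPos, ← sum_ind_alternating_chainLabelsExcept_zero hL,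
    ← add_zero (∑ w : Fin (L + 1) → Fin m × Bool, _ * ind (Alternating true _)),
    ← sum_ind_alternating_chainLabelsExcept_succ (lab := lab), ← Finset.sum_add_distrib]
  refine Finset.sum_congr rfl fun w _ => ?_
  by_cases hw : IsSignedPerm w ∧ TopLetterPos w
  · rw [← H.sum_ind_alternating_chainLabelsExcept hw.1.1, Fin.sum_univ_succ, mul_add,
      Finset.mul_sum]
  · simp [ind_neg hw]

lemma fanCount_zero : fanCount lab 0 = 1 := by
  have hw : ∀ w : Fin 0 → Fin m × Bool, IsSignedPerm w := fun _ =>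
    ⟨fun i => i.elim0, fun i => i.elim0⟩
  simp [fanCount, chainLabels, hw, ind_pos, alternating_zero]

lemma IsTuckerLabelling.fanCount_eq_one (H : IsTuckerLabelling N lab) (hL : L ≤ m) :
    fanCount lab L = 1 := by
  induction L with
  | zero => exact fanCount_zero
  | succ L ih => rw [H.fanCount_succ hL, ih (by omega)]

/-- Tucker's lemma for the first barycentric subdivision of the cross-polytope. -/
theorem IsTuckerLabelling.dim_le (H : IsTuckerLabelling N lab) : m ≤ N := by
  obtain ⟨w, hw⟩ : ∃ w : Fin m → Fin m × Bool,
      ind (IsSignedPerm w) * ind (Alternating true (chainLabels lab w)) ≠ 0 := by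
    by_contra! h
    simpa [fanCount, h] using H.fanCount_eq_one le_rfl
  rw [← ind_and, ind_ne_zero_iff] at hw
  obtain ⟨⟨hinj, -⟩, halt⟩ := hw
  have hcard := halt.card_le (N := N) fun x hx => by
    refine ⟨fun h0 => H.add_ne_zero_of_mem_chainLabels hinj x hx x hx (by simp [h0]), ?_⟩
    obtain ⟨q, -, rfl⟩ := Multiset.mem_map.1 hx
    exact H.abs_le _ _ (disjoint_tailSet hinj q) (tailSet_union_nonempty w q)
  simpa [chainLabels] using hcard

end Tucker

section Kneser

variable {α : Type*} {m r k : ℕ}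

lemma ne_of_disjoint_of_union_nonempty [DecidableEq α] {A B : Finset α} (hd : Disjoint A B)
    (hne : (A ∪ B).Nonempty) : A ≠ B := by
  rintro rfl
  simp_all

noncomputable def someSubset (r : ℕ) (A : Finset α) : Finset α :=
  if h : r ≤ #A then (exists_subset_card_eq h).choose else ∅

lemma someSubset_subset {A : Finset α} (h : r ≤ #A) : someSubset r A ⊆ A := by
  rw [someSubset, dif_pos h]
  exact (exists_subset_card_eq h).choose_spec.1

lemma card_someSubset {A : Finset α} (h : r ≤ #A) : #(someSubset r A) = r := by
  rw [someSubset, dif_pos h]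
  exact (exists_subset_card_eq h).choose_spec.2

def BigSide (A B : Finset (Fin m)) : Prop :=
  #B < #A ∨ #B = #A ∧ toColex B < toColex A

lemma bigSide_swap {A B : Finset (Fin m)} (hAB : A ≠ B) : BigSide B A ↔ ¬ BigSide A B := by
  have hc : toColex A ≠ toColex B := fun h => hAB (toColex_inj.1 h)
  unfold BigSide
  rcases lt_trichotomy #A #B with h | h | h
  · simp [h, h.ne, h.ne', h.not_gt]
  · simpa [h] using lt_iff_le_and_ne.trans (and_iff_left hc)
  · simp [h, h.ne, h.ne', h.not_gt]

lemma card_le_of_bigSide (hr : 1 ≤ r) {A B : Finset (Fin m)} (hbig : ¬ #A + #B ≤ 2 * r - 2)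
    (hs : BigSide A B) : r ≤ #A := by
  rcases hs with h | ⟨h, -⟩ <;> omega

variable (r) in
open scoped Classical in
/-- Matoušek's labelling, from his combinatorial proof of Kneser's conjecture. -/
noncomputable def kneserValue (c : Finset (Fin m) → Fin k) (A B : Finset (Fin m)) : ℕ :=
  if #A + #B ≤ 2 * r - 2 then #A + #B else 2 * r - 1 + c (someSubset r A)

variable (r) in
open scoped Classical in
noncomputable def kneserLabel (c : Finset (Fin m) → Fin k) (A B : Finset (Fin m)) : ℤ :=
  if BigSide A B then kneserValue r c A B else -kneserValue r c B A

lemma kneserLabel_antipodal (c : Finset (Fin m) → Fin k) {A B : Finset (Fin m)}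
    (hd : Disjoint A B) (hne : (A ∪ B).Nonempty) :
    kneserLabel r c B A = -kneserLabel r c A B := by
  have hswap := bigSide_swap (ne_of_disjoint_of_union_nonempty hd hne)
  by_cases h : BigSide A B <;> simp [kneserLabel, h, hswap]

lemma kneserValue_le (c : Finset (Fin m) → Fin k) (A B : Finset (Fin m)) :
    kneserValue r c A B ≤ 2 * r - 2 + k := by
  have := (c (someSubset r A)).isLt
  unfold kneserValue
  split_ifs <;> omega

lemma abs_kneserLabel_le (c : Finset (Fin m) → Fin k) (A B : Finset (Fin m)) :
    |kneserLabel r c A B| ≤ (2 * r - 2 + k : ℕ) := by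
  unfold kneserLabel
  split_ifs
  · rw [abs_of_nonneg (by positivity)]; exact_mod_cast kneserValue_le c A B
  · rw [abs_neg, abs_of_nonneg (by positivity)]; exact_mod_cast kneserValue_le c B A

lemma one_le_kneserValue (hr : 1 ≤ r) (c : Finset (Fin m) → Fin k) {A B : Finset (Fin m)}
    (hne : (A ∪ B).Nonempty) : 1 ≤ kneserValue r c A B := by
  have := (card_union_le A B).trans' hne.card_pos
  unfold kneserValue
  split_ifs <;> omega

/-- Equal values on a nested pair with opposite big sides would give, in the large case, two
disjoint `r`-sets of the same colour. -/
lemma kneserValue_ne (hr : 1 ≤ r) {c : Finset (Fin m) → Fin k}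
    (hc : ∀ S T, #S = r → #T = r → Disjoint S T → c S ≠ c T) {A B A' B' : Finset (Fin m)}
    (hd' : Disjoint A' B') (hne : (A ∪ B).Nonempty) (hA : A ⊆ A') (hB : B ⊆ B')
    (hs : BigSide A B) (hs' : BigSide B' A') : kneserValue r c A B ≠ kneserValue r c B' A' := by
  have hcardA := card_le_card hA
  have hcardB := card_le_card hB
  intro heq
  unfold kneserValue at heq
  split_ifs at heq with hsmall hsmall' hsmall'
  · obtain rfl : A = A' := eq_of_subset_of_card_le hA (by omega)
    obtain rfl : B = B' := eq_of_subset_of_card_le hB (by omega)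
    exact (bigSide_swap (ne_of_disjoint_of_union_nonempty hd' hne)).1 hs' hs
  · omega
  · omega
  · have hrA := card_le_of_bigSide hr hsmall hs
    have hrB := card_le_of_bigSide hr hsmall' hs'
    refine hc _ _ (card_someSubset hrA) (card_someSubset hrB)
      (hd'.mono ((someSubset_subset hrA).trans hA) (someSubset_subset hrB)) (Fin.ext (by omega))

lemma kneserLabel_add_ne_zero (hr : 1 ≤ r) {c : Finset (Fin m) → Fin k}
    (hc : ∀ S T, #S = r → #T = r → Disjoint S T → c S ≠ c T) {A B A' B' : Finset (Fin m)}
    (hd' : Disjoint A' B') (hne : (A ∪ B).Nonempty) (hA : A ⊆ A') (hB : B ⊆ B') :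
    kneserLabel r c A' B' + kneserLabel r c A B ≠ 0 := by
  have hne' : (A' ∪ B').Nonempty := hne.mono (union_subset_union hA hB)
  have hAB : A ≠ B := ne_of_disjoint_of_union_nonempty (hd'.mono hA hB) hne
  have hAB' : A' ≠ B' := ne_of_disjoint_of_union_nonempty hd' hne'
  have h₁ := one_le_kneserValue hr c hne
  have h₂ := one_le_kneserValue hr c hne'
  have h₃ := one_le_kneserValue hr c (union_comm A B ▸ hne)
  have h₄ := one_le_kneserValue hr c (union_comm A' B' ▸ hne')
  unfold kneserLabel
  split_ifs with hs' hs hs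
  · omega
  · have := kneserValue_ne hr hc hd'.symm (union_comm A B ▸ hne) hB hA
      ((bigSide_swap hAB).2 hs) hs'
    omega
  · have := kneserValue_ne hr hc hd' hne hA hB hs ((bigSide_swap hAB').2 hs')
    omega
  · omega

theorem lovasz_kneser_fin (hm : 2 * r + k ≤ m + 1) (c : Finset (Fin m) → Fin k) :
    ∃ S T, #S = r ∧ #T = r ∧ Disjoint S T ∧ c S = c T := by
  rcases Nat.eq_zero_or_pos r with rfl | hr
  · exact ⟨∅, ∅, rfl, rfl, disjoint_empty_left _, rfl⟩
  by_contra! hc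
  have H : IsTuckerLabelling (2 * r - 2 + k) (kneserLabel r c) :=
    ⟨fun _ _ => kneserLabel_antipodal c, fun _ _ _ _ => kneserLabel_add_ne_zero hr hc,
      fun A B _ _ => abs_kneserLabel_le c A B⟩
  have := H.dim_le
  omega

theorem lovasz_kneser (E : Finset α) (hE : 2 * r + k ≤ #E + 1) (c : Finset α → Fin k) :
    ∃ S ⊆ E, ∃ T ⊆ E, #S = r ∧ #T = r ∧ Disjoint S T ∧ c S = c T := by
  let φ : Fin #E ↪ α := E.equivFin.symm.toEmbedding.trans (Function.Embedding.subtype _)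
  have hφ : ∀ U : Finset (Fin #E), U.map φ ⊆ E := fun U x hx => by
    obtain ⟨i, -, rfl⟩ := mem_map.1 hx
    exact (E.equivFin.symm i).2
  obtain ⟨S, T, hS, hT, hST, hcST⟩ := lovasz_kneser_fin hE (c ∘ map φ)
  exact ⟨S.map φ, hφ S, T.map φ, hφ T, by rwa [card_map], by rwa [card_map],
    (disjoint_map φ).2 hST, hcST⟩

end Kneser

section HammingBall

variable {β : Type*} [DecidableEq β]

lemma ind_sub_ind_sub_eq_zero_iff {P Q : Prop} (hPQ : ¬ (P ∧ Q)) (x : ZMod 2) :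
    ind P - ind Q - x = 0 ↔ ((P ∨ Q) ↔ x ≠ 0) := by
  by_cases hP : P <;> by_cases hQ : Q
  · exact absurd ⟨hP, hQ⟩ hPQ
  all_goals simp only [ind, hP, hQ, if_true, if_false, or_true, or_false, true_iff, false_iff,
    not_not]; revert x; decide

lemma ind_mem_injective : Function.Injective fun (S : Finset β) (τ : β) => ind (τ ∈ S) := by
  intro S T h
  ext τ
  have := congrFun h τ
  by_cases hS : τ ∈ S <;> by_cases hT : τ ∈ T <;> simp_all [ind]

lemma filter_ind_sub_ind_sub_ne_zero_subset [Fintype β] (g : β → ZMod 2) {E S T : Finset β}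
    (hgE : ∀ τ, g τ ≠ 0 → τ ∈ E) (hSE : S ⊆ E) (hTE : T ⊆ E) (hST : Disjoint S T) :
    univ.filter (fun τ => ind (τ ∈ S) - ind (τ ∈ T) - g τ ≠ 0)
      ⊆ (E \ (S ∪ T)) ∪ (E \ univ.filter fun τ => g τ ≠ 0) := by
  intro τ hτ
  have hτ' := (ind_sub_ind_sub_eq_zero_iff (fun h => disjoint_left.1 hST h.1 h.2) (g τ)).not.1
    (mem_filter.1 hτ).2
  by_cases hST : τ ∈ S ∨ τ ∈ T
  · have hτE : τ ∈ E := hST.elim (@hSE τ) (@hTE τ)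
    simp_all
  · simp_all

end HammingBall

end LovaszKneser

open LovaszKneser in
theorem stmt3 (n k : ℕ) (hkn : k < n) (g : (Fin n → Bool) → ZMod 2)
    (A : Fin k → Set ((Fin n → Bool) → ZMod 2))
    (hcover : ∀ x : (Fin n → Bool) → ZMod 2, ∃ j, x ∈ A j) :
    ∃ j : Fin k, ∃ a ∈ A j, ∃ b ∈ A j, a ≠ b ∧
      (Finset.univ.filter (fun τ : Fin n → Bool => (a - b - g) τ ≠ 0)).card ≤ 3 * k + 3 := by
  classical
  set D := univ.filter fun τ => g τ ≠ 0
  have hcard : k + 1 ≤ Fintype.card (Fin n → Bool) := by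
    simpa using hkn.trans (Nat.lt_two_pow_self (n := n))
  obtain ⟨E, hDE, hE⟩ :=
    exists_superset_card_eq (le_max_left #D (k + 1)) (max_le (card_le_univ D) hcard)
  choose c hc using fun S : Finset (Fin n → Bool) => hcover fun τ => ind (τ ∈ S)
  obtain ⟨S, hSE, T, hTE, hS, hT, hST, hcST⟩ :=
    lovasz_kneser (r := (#E - k + 1) / 2) E (by omega) c
  have hSne : S.Nonempty := card_pos.1 (by omega)
  refine ⟨c S, _, hc S, _, hcST ▸ hc T,
    ind_mem_injective.ne (ne_of_disjoint_of_union_nonempty hST (hSne.mono subset_union_left)),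
    ?_⟩
  have hgE : ∀ τ, g τ ≠ 0 → τ ∈ E := fun τ hτ => hDE (by simpa [D] using hτ)
  calc _ ≤ #((E \ (S ∪ T)) ∪ (E \ D)) :=
        card_le_card (filter_ind_sub_ind_sub_ne_zero_subset g hgE hSE hTE hST)
    _ ≤ #(E \ (S ∪ T)) + #(E \ D) := card_union_le _ _
    _ ≤ 3 * k + 3 := by
      rw [card_sdiff_of_subset (union_subset hSE hTE), card_sdiff_of_subset hDE,
        card_union_of_disjoint hST]
      omega
end

section
/- Let $G$ be a countable abelian group and $A \subseteq G$. Suppose there is a syndetic set $S \subseteq G$ such that for every finite $F \subseteq S$ there exists $g \in G$ with $F + g \subseteq A$. Then there is a finite set $K \subseteq G$ such that $A + K$ is thick. -/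
open scoped Pointwise

/-- `S` is syndetic: finitely many translates of `S` cover `G`. -/
def Syndetic {G : Type*} [AddCommGroup G] (S : Set G) : Prop :=
  ∃ F : Finset G, ∀ g : G, ∃ s ∈ S, ∃ f ∈ F, g = s + f

/-- `R` is thick: every finite subset of `G` has a translate inside `R`. -/
def Thick {G : Type*} [AddCommGroup G] (R : Set G) : Prop :=
  ∀ F : Finset G, ∃ g : G, ∀ f ∈ F, f + g ∈ R

theorem stmt11 {G : Type*} [AddCommGroup G] [Countable G] (A S : Set G)
    (hS : Syndetic S)
    (hpattern : ∀ F : Finset G, (F : Set G) ⊆ S → ∃ g : G, ∀ f ∈ F, f + g ∈ A) :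
    ∃ K : Finset G, Thick (A + (K : Set G)) := by
  classical
  obtain ⟨K, hK⟩ := hS
  refine ⟨K, fun F => ?_⟩
  set E : Finset G := (F - K).filter (· ∈ S) with hE
  obtain ⟨g, hg⟩ := hpattern E (by
    intro x hx
    simp only [hE, Finset.coe_filter, Set.mem_setOf_eq] at hx
    exact hx.2)
  refine ⟨g, fun f hf => ?_⟩
  obtain ⟨s, hsS, k, hkK, hfk⟩ := hK f
  have hsE : s ∈ E := by
    simp only [hE, Finset.mem_filter, Finset.mem_sub]
    exact ⟨⟨f, hf, k, hkK, by rw [hfk]; abel⟩, hsS⟩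
  exact ⟨s + g, hg s hsE, k, hkK, by rw [hfk]; abel⟩
end

section
/- Let $G$ be a countable abelian group and let $S \subseteq G$ be such that every translate of $S$ is a set of measurable recurrence. Then for every measure preserving $G$-system $(X,\mu,T)$ and all measurable $C, D \subseteq X$, if $\mu(C \cap T^g D) > 0$ for some $g \in G$, then there exists $h \in S$ with $\mu(C \cap T^h D) > 0$. -/
open MeasureTheory

/-- `R` is a set of measurable recurrence for the countable abelian group `G`. -/
def IsMeasurableRecurrence {G : Type*} [AddCommGroup G] (R : Set G) : Prop :=
  ∀ (X : Type) (_ : MeasurableSpace X) (μ : Measure X), IsProbabilityMeasure μ →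
    ∀ T : G → X → X, (∀ g, MeasurePreserving (T g) μ μ) →
      (∀ g h x, T (g + h) x = T g (T h x)) → (∀ x, T 0 x = x) →
      ∀ D : Set X, MeasurableSet D → 0 < μ D → ∃ g ∈ R, 0 < μ (D ∩ T g '' D)

theorem stmt13 {G : Type*} [AddCommGroup G] [Countable G] (S : Set G)
    (hS : ∀ t : G, IsMeasurableRecurrence ((· + t) '' S))
    (X : Type) (_ : MeasurableSpace X) (μ : Measure X) (_ : IsProbabilityMeasure μ)
    (T : G → X → X) (hT : ∀ g, MeasurePreserving (T g) μ μ)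
    (hadd : ∀ g h x, T (g + h) x = T g (T h x)) (hzero : ∀ x, T 0 x = x)
    (C D : Set X) (hC : MeasurableSet C) (hD : MeasurableSet D)
    (hpos : ∃ g : G, 0 < μ (C ∩ T g '' D)) :
    ∃ h ∈ S, 0 < μ (C ∩ T h '' D) := by
  obtain ⟨g₀, hg₀⟩ := hpos
  have himg : T g₀ '' D = (T (-g₀)) ⁻¹' D := by
    ext x
    constructor
    · rintro ⟨y, hy, rfl⟩
      show T (-g₀) (T g₀ y) ∈ D
      rw [← hadd]
      simpa [hzero] using hy
    · intro hx
      exact ⟨T (-g₀) x, hx, by rw [← hadd]; simp [hzero]⟩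
  have hEmeas : MeasurableSet (C ∩ T g₀ '' D) := by
    rw [himg]; exact hC.inter (((hT (-g₀)).measurable) hD)
  obtain ⟨h', ⟨s, hsS, rfl⟩, hpos'⟩ := hS (-g₀) X ‹_› μ ‹_› T hT hadd hzero _ hEmeas hg₀
  refine ⟨s, hsS, lt_of_lt_of_le hpos' (measure_mono ?_)⟩
  rintro x ⟨⟨hxC, -⟩, y, ⟨-, z, hz, rfl⟩, rfl⟩
  refine ⟨hxC, z, hz, ?_⟩
  rw [← hadd, neg_add_cancel_right]
end

section
/- Let $G$ be a countable abelian group and $S \subseteq G$. If every translate of $S$ is a set of topological recurrence, then for every minimal topological $G$-system $(X,T)$ and all nonempty open sets $U, V \subseteq X$, there exists $h \in S$ such that $U \cap T^h V \neq \varnothing$. -/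
/-- `R` is a set of topological recurrence for the countable abelian group `G`. -/
def IsTopologicalRecurrence {G : Type*} [AddCommGroup G] (R : Set G) : Prop :=
  ∀ (X : Type) (_ : TopologicalSpace X), CompactSpace X → TopologicalSpace.MetrizableSpace X →
    ∀ T : G → X → X, (∀ g, Continuous (T g)) →
      (∀ g h x, T (g + h) x = T g (T h x)) → (∀ x, T 0 x = x) →
      (∀ x : X, Dense (Set.range fun g => T g x)) →
      ∀ U : Set X, IsOpen U → U.Nonempty → ∃ g ∈ R, (U ∩ T g '' U).Nonempty

theorem stmt15 {G : Type*} [AddCommGroup G] [Countable G] (S : Set G)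
    (hS : ∀ t : G, IsTopologicalRecurrence ((· + t) '' S))
    (X : Type) (_ : TopologicalSpace X) (_ : CompactSpace X) (_ : TopologicalSpace.MetrizableSpace X)
    (T : G → X → X) (hcont : ∀ g, Continuous (T g))
    (hadd : ∀ g h x, T (g + h) x = T g (T h x)) (hzero : ∀ x, T 0 x = x)
    (hmin : ∀ x : X, Dense (Set.range fun g => T g x))
    (U V : Set X) (hU : IsOpen U) (hV : IsOpen V) (hUne : U.Nonempty) (hVne : V.Nonempty) :
    ∃ h ∈ S, (U ∩ T h '' V).Nonempty := by
  obtain ⟨x, hx⟩ := hVne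
  -- find t with T t x ∈ U
  obtain ⟨_, ⟨t, rfl⟩, hyU⟩ := (hmin x).exists_mem_open hU hUne
  -- T t '' V = T (-t) ⁻¹' V
  have himg : T t '' V = T (-t) ⁻¹' V := by
    ext y
    constructor
    · rintro ⟨v, hv, rfl⟩
      have : T (-t) (T t v) = v := by rw [← hadd, neg_add_cancel, hzero]
      simpa [Set.mem_preimage, this]
    · intro hy
      exact ⟨T (-t) y, hy, by rw [← hadd, add_neg_cancel, hzero]⟩
  set W := U ∩ T t '' V with hW
  have hWopen : IsOpen W := hU.inter (himg ▸ hV.preimage (hcont (-t)))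
  have hWne : W.Nonempty := ⟨T t x, hyU, ⟨x, hx, rfl⟩⟩
  obtain ⟨g, ⟨s, hsS, rfl⟩, y, hyW, z, hzW, rfl⟩ :=
    hS (-t) X ‹_› ‹_› ‹_› T hcont hadd hzero hmin W hWopen hWne
  obtain ⟨v, hv, rfl⟩ := hzW.2
  refine ⟨s, hsS, T (s + -t) (T t v), hyW.1, v, hv, ?_⟩
  rw [← hadd, add_assoc, neg_add_cancel, add_zero]
end

section
/- Let $G$ be a countable abelian group and let $X = \{0,1\}^G$ with the shift action $(\sigma^g x)(h) = x(h+g)$. Let $A \subseteq G$ and suppose $A + F$ is thick for some finite $F \subseteq G$. Then the orbit closure of the indicator function $1_A$ in $X$ contains a point $x$ such that for every $g \in G$ there exists $h \in F$ with $x(g - h) = 1$; in particular the orbit closure contains a minimal subsystem other than the fixed point $\{x_0\}$, where $x_0$ is the constant $0$ function. -/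
/-!
Thickness of `A + F` means that every finite window of `G` is covered by `F`-translates of the
support of some shift of `1_A`; compactness of `{0,1}^G` turns these finite approximations into a
point `x` of the orbit closure whose support `S` satisfies `S + F = G`. Such points form a closed
shift-invariant set not containing `0`, so by Zorn's lemma it contains a minimal subsystem, which
is then different from `{0}`.
-/

open scoped Classical

/-- The boolean indicator function of a set. -/
noncomputable def indB {G : Type*} (A : Set G) : G → Bool :=
  fun h => if h ∈ A then true else false

/-- The shift action of `G` on `{0,1}^G`. -/
def shift {G : Type*} [AddCommGroup G] (g : G) (x : G → Bool) : G → Bool :=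
  fun h => x (h + g)

theorem exists_minimal_isClosed_mapsTo_subset {X ι : Type*} [TopologicalSpace X]
    [CompactSpace X] (T : ι → X → X) {K : Set X} (hK : IsClosed K) (hKne : K.Nonempty)
    (hKT : ∀ i, Set.MapsTo (T i) K K) :
    ∃ Y ⊆ K, Minimal (fun Z : Set X => IsClosed Z ∧ Z.Nonempty ∧ ∀ i, Set.MapsTo (T i) Z Z) Y := by
  refine zorn_superset_nonempty _ (fun c hcS hc hcne => ?_) K ⟨hK, hKne, hKT⟩
  have : Nonempty c := hcne.to_subtype
  refine ⟨⋂₀ c, ⟨isClosed_sInter fun Z hZ => (hcS hZ).1, ?_, fun i => ?_⟩,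
    fun Z hZ => Set.sInter_subset_of_mem hZ⟩
  · refine IsCompact.nonempty_sInter_of_directed_nonempty_isCompact_isClosed (fun a ha b hb => ?_)
      (fun Z hZ => (hcS hZ).2.1) (fun Z hZ => (hcS hZ).1.isCompact) (fun Z hZ => (hcS hZ).1)
    rcases hc.total ha hb with hab | hba
    exacts [⟨a, ha, subset_rfl, hab⟩, ⟨b, hb, hba, subset_rfl⟩]
  · exact fun x hx => Set.mem_sInter.2 fun Z hZ => (hcS hZ).2.2 i (hx Z hZ)

section Shift

variable {G : Type*} [AddCommGroup G]

theorem continuous_shift (g : G) : Continuous (shift g : (G → Bool) → G → Bool) :=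
  continuous_pi fun h => continuous_apply (h + g)

theorem shift_shift (g g' : G) (x : G → Bool) : shift g (shift g' x) = shift (g' + g) x := by
  funext h
  simp only [shift, add_assoc, add_comm g]

@[simp]
theorem shift_zero (x : G → Bool) : shift 0 x = x := by
  funext h
  simp only [shift, add_zero]

theorem image_shift_eq_of_mapsTo {Y : Set (G → Bool)} (hY : ∀ t, Set.MapsTo (shift t) Y Y)
    (t : G) : shift t '' Y = Y := by
  refine (Set.mapsTo_iff_image_subset.1 (hY t)).antisymm fun y hy => ⟨shift (-t) y, hY (-t) hy, ?_⟩
  rw [shift_shift, neg_add_cancel, shift_zero]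

theorem mapsTo_shift_closure_orbit (x : G → Bool) (t : G) :
    Set.MapsTo (shift t) (closure (Set.range fun g : G => shift g x))
      (closure (Set.range fun g : G => shift g x)) := by
  refine Set.MapsTo.closure ?_ (continuous_shift t)
  rintro _ ⟨g, rfl⟩
  exact ⟨g + t, (shift_shift t g x).symm⟩

/-- The points whose support `S` satisfies `S + F = G`. -/
def syndeticPoints (F : Finset G) : Set (G → Bool) :=
  {x | ∀ g, ∃ h ∈ F, x (g - h) = true}

theorem syndeticPoints_eq_iInter (F : Finset G) :
    syndeticPoints F = ⋂ g, {x : G → Bool | ∃ h ∈ F, x (g - h) = true} := by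
  ext x
  simp [syndeticPoints]

theorem isClosed_setOf_exists_mem_apply_sub_eq_true (F : Finset G) (g : G) :
    IsClosed {x : G → Bool | ∃ h ∈ F, x (g - h) = true} := by
  have hunion : {x : G → Bool | ∃ h ∈ F, x (g - h) = true} =
      ⋃ h ∈ F, (fun x : G → Bool => x (g - h)) ⁻¹' {true} := by
    ext x
    simp
  rw [hunion]
  exact isClosed_biUnion_finset fun h _ => isClosed_singleton.preimage (continuous_apply (g - h))

theorem isClosed_syndeticPoints (F : Finset G) : IsClosed (syndeticPoints F) := by
  rw [syndeticPoints_eq_iInter]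
  exact isClosed_iInter (isClosed_setOf_exists_mem_apply_sub_eq_true F)

theorem mapsTo_shift_syndeticPoints (F : Finset G) (t : G) :
    Set.MapsTo (shift t) (syndeticPoints F) (syndeticPoints F) := by
  intro x hx g
  obtain ⟨h, hF, hxh⟩ := hx (g + t)
  exact ⟨h, hF, by simpa only [shift, sub_add_eq_add_sub] using hxh⟩

theorem const_false_notMem_syndeticPoints (F : Finset G) :
    (fun _ => false) ∉ syndeticPoints F := by
  intro h
  obtain ⟨_, _, hfalse⟩ := h 0
  exact Bool.false_ne_true hfalse

end Shift

theorem Thick.exists_shift_indB_mem_biInter {G : Type*} [AddCommGroup G] {A : Set G}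
    {F : Finset G} (hthick : Thick {x : G | ∃ a ∈ A, ∃ f ∈ F, x = a + f}) (u : Finset G) :
    ∃ s, shift s (indB A) ∈ ⋂ g ∈ u, {x : G → Bool | ∃ h ∈ F, x (g - h) = true} := by
  obtain ⟨s, hs⟩ := hthick u
  refine ⟨s, Set.mem_iInter₂.2 fun g hg => ?_⟩
  obtain ⟨a, ha, f, hf, hgs⟩ := hs g hg
  have hgf : g - f + s = a := by rw [sub_add_eq_add_sub, hgs, add_sub_cancel_right]
  exact ⟨f, hf, by simp [shift, indB, hgf, ha]⟩

theorem Thick.closure_orbit_inter_syndeticPoints_nonempty {G : Type*} [AddCommGroup G]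
    {A : Set G} {F : Finset G} (hthick : Thick {x : G | ∃ a ∈ A, ∃ f ∈ F, x = a + f}) :
    (closure (Set.range fun g : G => shift g (indB A)) ∩ syndeticPoints F).Nonempty := by
  rw [syndeticPoints_eq_iInter]
  refine isClosed_closure.isCompact.inter_iInter_nonempty _
    (isClosed_setOf_exists_mem_apply_sub_eq_true F) fun u => ?_
  obtain ⟨s, hs⟩ := hthick.exists_shift_indB_mem_biInter u
  exact ⟨_, subset_closure ⟨s, rfl⟩, hs⟩

theorem stmt17_general {G : Type*} [AddCommGroup G] (A : Set G) (F : Finset G)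
    (hthick : Thick {x : G | ∃ a ∈ A, ∃ f ∈ F, x = a + f}) :
    (∃ x ∈ closure (Set.range fun g : G => shift g (indB A)),
        ∀ g : G, ∃ h ∈ F, x (g - h) = true) ∧
      ∃ Y : Set (G → Bool),
        Y ⊆ closure (Set.range fun g : G => shift g (indB A)) ∧
        IsClosed Y ∧ Y.Nonempty ∧ (∀ g : G, shift g '' Y = Y) ∧
        (∀ Z ⊆ Y, IsClosed Z → Z.Nonempty → (∀ g : G, shift g '' Z = Z) → Z = Y) ∧
        Y ≠ {fun _ => false} := by
  obtain ⟨x, hx⟩ := hthick.closure_orbit_inter_syndeticPoints_nonempty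
  obtain ⟨Y, hYK, hYmin⟩ := exists_minimal_isClosed_mapsTo_subset shift
    (isClosed_closure.inter (isClosed_syndeticPoints F)) ⟨x, hx⟩
    fun t => (mapsTo_shift_closure_orbit _ t).inter_inter (mapsTo_shift_syndeticPoints F t)
  obtain ⟨hYclosed, hYne, hYinv⟩ := hYmin.prop
  refine ⟨⟨x, hx⟩, Y, fun z hz => (hYK hz).1, hYclosed, hYne,
    image_shift_eq_of_mapsTo hYinv, fun Z hZY hZclosed hZne hZinv => ?_, ?_⟩
  · exact hYmin.eq_of_subset
      ⟨hZclosed, hZne, fun t => Set.mapsTo_iff_image_subset.2 (hZinv t).le⟩ hZY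
  · rintro rfl
    exact const_false_notMem_syndeticPoints F (hYK (Set.mem_singleton _)).2

theorem stmt17 {G : Type*} [AddCommGroup G] [Countable G] (A : Set G) (F : Finset G)
    (hthick : Thick {x : G | ∃ a ∈ A, ∃ f ∈ F, x = a + f}) :
    (∃ x ∈ closure (Set.range fun g : G => shift g (indB A)),
        ∀ g : G, ∃ h ∈ F, x (g - h) = true) ∧
      ∃ Y : Set (G → Bool),
        Y ⊆ closure (Set.range fun g : G => shift g (indB A)) ∧
        IsClosed Y ∧ Y.Nonempty ∧ (∀ g : G, shift g '' Y = Y) ∧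
        (∀ Z ⊆ Y, IsClosed Z → Z.Nonempty → (∀ g : G, shift g '' Z = Z) → Z = Y) ∧
        Y ≠ {fun _ => false} :=
  stmt17_general A F hthick
end
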